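/- Let $f = (f_1,\dots,f_N)$ be a triangular tuple of polynomials over a field $k$ such that $f_1,\dots,f_N$ are algebraically independent over $k$. Then for every $n \ge 0$ and every $1 \le i \le N$, the $i$-th component of the $n$-fold self-composition satisfies $\deg_{x_i}\big((f^{\circ n})_i\big) = \big(\deg_{x_i} f_i\big)^n$. -/

import Mathlib

/-!
Write `fᵢ = ∑ⱼ cⱼ xᵢʲ` with coefficients `cⱼ` in the variables `x_{>i}` and put `g = f^∘n`, so
that `(f^∘(n+1))ᵢ = ∑ⱼ cⱼ(g) gᵢʲ`. Composition preserves triangularity, so the `cⱼ(g)` are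
still free of `xᵢ`, and algebraic independence makes `h ↦ h(g)` injective, so the leading
coefficient `c_d(g)` does not vanish. As a polynomial in `xᵢ` over an integral domain,
`(f^∘(n+1))ᵢ` is therefore a degree-`d` polynomial composed with `gᵢ`, whose degree is
`d · deg_{xᵢ} gᵢ`.
-/

open MvPolynomial

/-- The `n`-fold self-composition of a tuple of multivariate polynomials:
`(f^∘0)ᵢ = Xᵢ` and `(f^∘(n+1))ⱼ = fⱼ((f^∘n)₁, …, (f^∘n)_N)`. -/
noncomputable def iterComp {k : Type*} [CommSemiring k] {N : ℕ}
    (f : Fin N → MvPolynomial (Fin N) k) : ℕ → Fin N → MvPolynomial (Fin N) k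
  | 0 => fun i => X i
  | n + 1 => fun i => bind₁ (iterComp f n) (f i)

namespace MvPolynomial

section PolynomialIn

variable {R σ : Type*} [CommSemiring R] [DecidableEq σ]

variable (R) in
noncomputable def polynomialInEquiv (i : σ) :
    MvPolynomial σ R ≃ₐ[R] Polynomial (MvPolynomial {j // j ≠ i} R) :=
  (renameEquiv R (Equiv.optionSubtypeNe i).symm).trans (optionEquivLeft R _)

theorem natDegree_polynomialInEquiv (i : σ) (p : MvPolynomial σ R) :
    (polynomialInEquiv R i p).natDegree = degreeOf i p :=
  (degreeOf_eq_natDegree i p).symm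

theorem eval_map_rename_polynomialInEquiv (i : σ) (p : MvPolynomial σ R) :
    ((polynomialInEquiv R i p).map (rename Subtype.val).toRingHom).eval (X i) = p := by
  induction p using MvPolynomial.induction_on with
  | C a => simp [polynomialInEquiv]
  | add p q hp hq => simp only [map_add, Polynomial.map_add, Polynomial.eval_add, hp, hq]
  | mul_X p j hp =>
    simp only [map_mul, Polynomial.map_mul, Polynomial.eval_mul, hp]
    congr 1
    by_cases hj : j = i
    · subst hj; simp [polynomialInEquiv]
    · simp [polynomialInEquiv, Equiv.optionSubtypeNe_symm_of_ne hj]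

theorem mem_vars_of_mem_vars_coeff_polynomialInEquiv {i : σ} {p : MvPolynomial σ R} {n : ℕ}
    {j : {j // j ≠ i}} (hj : j ∈ ((polynomialInEquiv R i p).coeff n).vars) : (j : σ) ∈ p.vars := by
  obtain ⟨m, hm, hjm⟩ := (mem_vars_iff_mem_support j).mp hj
  have hsome : some j ∈ (rename (Equiv.optionSubtypeNe i).symm p).vars := by
    refine (mem_vars_iff_mem_support _).mpr ⟨m.optionElim n, ?_, ?_⟩
    · exact (mem_support_coeff_optionEquivLeft R).mp hm
    · simpa using hjm
  obtain ⟨l, hl, hlj⟩ := Finset.mem_image.mp (vars_rename _ p hsome)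
  rw [Equiv.symm_apply_eq] at hlj
  simpa [hlj] using hl

variable [NoZeroDivisors R]

theorem degreeOf_eval_eq_natDegree_mul (i : σ) (Q : Polynomial (MvPolynomial σ R))
    (hQ : ∀ n, i ∉ (Q.coeff n).vars) (b : MvPolynomial σ R) :
    degreeOf i (Q.eval b) = Q.natDegree * degreeOf i b := by
  set T := polynomialInEquiv R i
  -- Coefficients free of `X i` become constants under `T`, so `T (Q.eval b) = Q'.comp (T b)`.
  have hlifts : Q.map (T : MvPolynomial σ R →+* Polynomial (MvPolynomial {j // j ≠ i} R)) ∈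
      Polynomial.lifts Polynomial.C := by
    refine (Polynomial.lifts_iff_coeff_lifts _).mpr fun n => ⟨(T (Q.coeff n)).coeff 0, ?_⟩
    have h0 : (T (Q.coeff n)).natDegree = 0 := by
      rw [natDegree_polynomialInEquiv, ← not_ne_iff, ← mem_vars_iff_degreeOf_ne_zero]
      exact hQ n
    rw [Polynomial.coeff_map]
    exact (Polynomial.eq_C_of_natDegree_eq_zero h0).symm
  obtain ⟨Q', hQ'⟩ := (Polynomial.lifts_iff_set_range _).mp hlifts
  have hdeg : Q'.natDegree = Q.natDegree := by
    rw [← Polynomial.natDegree_map_eq_of_injective (Polynomial.C_injective), hQ',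
      Polynomial.natDegree_map_eq_of_injective T.injective]
  calc degreeOf i (Q.eval b) = (T (Q.eval b)).natDegree := (natDegree_polynomialInEquiv i _).symm
    _ = (Q'.comp (T b)).natDegree := by
      rw [Polynomial.comp, ← Polynomial.eval_map, hQ', ← RingHom.coe_coe T,
        Polynomial.eval_map_apply]
    _ = Q.natDegree * degreeOf i b := by
      rw [Polynomial.natDegree_comp, hdeg, natDegree_polynomialInEquiv]

theorem degreeOf_bind₁_of_injective {g : σ → MvPolynomial σ R}
    (hg : Function.Injective (bind₁ g)) {i : σ} {p : MvPolynomial σ R}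
    (hp : ∀ j ∈ p.vars, j ≠ i → i ∉ (g j).vars) :
    degreeOf i (bind₁ g p) = degreeOf i p * degreeOf i (g i) := by
  set P := (polynomialInEquiv R i p).map (rename Subtype.val).toRingHom
  have hP : P.eval (X i) = p := eval_map_rename_polynomialInEquiv i p
  have hPdeg : P.natDegree = degreeOf i p := by
    rw [Polynomial.natDegree_map_eq_of_injective (rename_injective _ Subtype.val_injective),
      natDegree_polynomialInEquiv]
  have hcoeff : ∀ n, i ∉ ((P.map (bind₁ g).toRingHom).coeff n).vars := by
    intro n hi
    rw [Polynomial.coeff_map] at hi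
    obtain ⟨j, hj, hij⟩ := mem_vars_bind₁ _ _ hi
    rw [Polynomial.coeff_map] at hj
    obtain ⟨l, hl, rfl⟩ := Finset.mem_image.mp (vars_rename _ _ hj)
    exact hp l (mem_vars_of_mem_vars_coeff_polynomialInEquiv hl) l.2 hij
  have hsubst : bind₁ g p = (P.map (bind₁ g).toRingHom).eval (g i) := by
    rw [← bind₁_X_right g i]
    conv_lhs => rw [← hP]
    exact (Polynomial.eval_map_apply _ _).symm
  rw [hsubst, degreeOf_eval_eq_natDegree_mul i _ hcoeff,
    Polynomial.natDegree_map_eq_of_injective hg, hPdeg]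

end PolynomialIn

def IsTriangular {R σ : Type*} [CommSemiring R] [Preorder σ] (f : σ → MvPolynomial σ R) : Prop :=
  ∀ i, ∀ j ∈ (f i).vars, i ≤ j

theorem IsTriangular.bind₁ {R σ : Type*} [CommSemiring R] [Preorder σ]
    {f g : σ → MvPolynomial σ R} (hf : IsTriangular f) (hg : IsTriangular g) :
    IsTriangular fun i => bind₁ g (f i) := by
  intro i l hl
  obtain ⟨j, hj, hl⟩ := mem_vars_bind₁ _ _ hl
  exact (hf i j hj).trans (hg j l hl)

end MvPolynomial

theorem MvPolynomial.IsTriangular.iterComp {k : Type*} [CommSemiring k] {N : ℕ}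
    {f : Fin N → MvPolynomial (Fin N) k} (hf : IsTriangular f) (n : ℕ) :
    IsTriangular (iterComp f n) := by
  induction n with
  | zero =>
    intro i j hj
    obtain ⟨d, hd, hjd⟩ := (mem_vars_iff_mem_support j).mp hj
    rw [Finset.mem_singleton.mp (support_monomial_subset hd)] at hjd
    exact (Finset.mem_singleton.mp (Finsupp.support_single_subset hjd)).ge
  | succ n ih => exact hf.bind₁ ih

theorem injective_bind₁_iterComp {k : Type*} [CommRing k] {N : ℕ}
    {f : Fin N → MvPolynomial (Fin N) k} (hf : AlgebraicIndependent k f) (n : ℕ) :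
    Function.Injective (bind₁ (iterComp f n)) := by
  induction n with
  | zero => simpa [iterComp] using Function.injective_id
  | succ n ih =>
    have : bind₁ (iterComp f (n + 1)) = (bind₁ (iterComp f n)).comp (bind₁ f) := by
      rw [bind₁_comp_bind₁]
      rfl
    rw [this, AlgHom.coe_comp]
    exact ih.comp hf

/-- Let `f` be a triangular tuple of polynomials over a field `k` whose
components are algebraically independent over `k`. Then for every `n ≥ 0` and every `i`,
`deg_{xᵢ}((f^∘n)ᵢ) = (deg_{xᵢ} fᵢ) ^ n`. -/
theorem degreeOf_diag_iterComp_eq_pow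
    {k : Type*} [Field k] {N : ℕ}
    (f : Fin N → MvPolynomial (Fin N) k)
    (hf : ∀ i j : Fin N, j < i → degreeOf j (f i) = 0)
    (hfind : AlgebraicIndependent k f)
    (n : ℕ) (i : Fin N) :
    degreeOf i (iterComp f n i) = (degreeOf i (f i)) ^ n := by
  have htri : IsTriangular f := fun i j hj =>
    not_lt.mp fun hji => mem_vars_iff_degreeOf_ne_zero.mp hj (hf i j hji)
  induction n with
  | zero => rw [iterComp, degreeOf_X, if_pos rfl, pow_zero]
  | succ n ih =>
    rw [iterComp, degreeOf_bind₁_of_injective (injective_bind₁_iterComp hfind n), ih, pow_succ']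
    exact fun j hj hji hi => hji (le_antisymm (htri.iterComp n j i hi) (htri i j hj))
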